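/- Let σ and p be real numbers with 1 < σ < 2 and p > 1. Then there exists a constant c > 0, depending only on σ, p (and not on ε), such that for every ε > 0 and every x ≥ 0, ∫₀^x (ε + y)^{σ−3} y dy ≤ c (∫₀^x (ε + y)^{(σ−3)/p} y^{1/p} dy)^{p(σ−1)/(σ+p−2)}. -/

import Mathlib

open intervalIntegral Real

lemma stmt_14_int1 {ε : ℝ} (hε : 0 < ε) (r : ℝ) {a b : ℝ} (ha : 0 ≤ a) (hab : a ≤ b) :
    IntervalIntegrable (fun y => (ε + y) ^ r * y) MeasureTheory.volume a b := by
  apply ContinuousOn.intervalIntegrable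
  apply ContinuousOn.mul _ continuousOn_id
  apply ContinuousOn.rpow_const ((continuous_const.add continuous_id).continuousOn)
  intro y hy
  rw [Set.uIcc_of_le hab] at hy
  have h0 : 0 ≤ y := le_trans ha hy.1
  left; apply ne_of_gt; change 0 < ε + y; linarith

lemma stmt_14_int2 {ε : ℝ} (hε : 0 < ε) (r t : ℝ) (ht : 0 ≤ t) {a b : ℝ} (ha : 0 ≤ a)
    (hab : a ≤ b) :
    IntervalIntegrable (fun y => (ε + y) ^ r * y ^ t) MeasureTheory.volume a b := by
  apply ContinuousOn.intervalIntegrable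
  apply ContinuousOn.mul
  · apply ContinuousOn.rpow_const ((continuous_const.add continuous_id).continuousOn)
    intro y hy
    rw [Set.uIcc_of_le hab] at hy
    have h0 : 0 ≤ y := le_trans ha hy.1
    left; apply ne_of_gt; change 0 < ε + y; linarith
  · exact ContinuousOn.rpow_const continuousOn_id (fun y hy => Or.inr ht)

lemma stmt_14_int0 {ε : ℝ} (hε : 0 < ε) (r : ℝ) {a b : ℝ} (ha : 0 ≤ a) (hab : a ≤ b) :
    IntervalIntegrable (fun y => (ε + y) ^ r) MeasureTheory.volume a b := by
  apply ContinuousOn.intervalIntegrable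
  apply ContinuousOn.rpow_const ((continuous_const.add continuous_id).continuousOn)
  intro y hy
  rw [Set.uIcc_of_le hab] at hy
  have h0 : 0 ≤ y := le_trans ha hy.1
  left; apply ne_of_gt; change 0 < ε + y; linarith

lemma stmt_14_alg {u x : ℝ} (hu : 0 < u) (hx : 0 < x) (a b : ℝ) :
    x / 2 * ((2 * u) ^ a * (x / 2) ^ b) = 2 ^ (a - b - 1) * (u ^ a * (x ^ b * x)) := by
  rw [Real.mul_rpow (by norm_num : (0:ℝ) ≤ 2) hu.le,
      Real.div_rpow hx.le (by norm_num : (0:ℝ) ≤ 2),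
      Real.rpow_sub (by norm_num : (0:ℝ) < 2), Real.rpow_sub (by norm_num : (0:ℝ) < 2),
      Real.rpow_one]
  have h2a : (0:ℝ) < 2 ^ a := Real.rpow_pos_of_pos (by norm_num) a
  have h2b : (0:ℝ) < 2 ^ b := Real.rpow_pos_of_pos (by norm_num) b
  field_simp

set_option maxHeartbeats 2000000 in
/-- For `1 < σ < 2` and `p > 1` there is a constant `c > 0`, depending only on
`σ, p`, such that for all `ε > 0` and `x ≥ 0`,
`∫₀ˣ (ε+y)^{σ-3} y dy ≤ c (∫₀ˣ (ε+y)^{(σ-3)/p} y^{1/p} dy)^{p(σ-1)/(σ+p-2)}`. -/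
theorem stmt_14 (σ p : ℝ) (hσ1 : 1 < σ) (hσ2 : σ < 2) (hp : 1 < p) :
    ∃ c : ℝ, 0 < c ∧ ∀ ε : ℝ, 0 < ε → ∀ x : ℝ, 0 ≤ x →
      (∫ y in (0 : ℝ)..x, (ε + y) ^ (σ - 3) * y) ≤
        c * (∫ y in (0 : ℝ)..x, (ε + y) ^ ((σ - 3) / p) * y ^ (1 / p)) ^
          (p * (σ - 1) / (σ + p - 2)) := by
  have hp0 : (0:ℝ) < p := by linarith
  have hps : 0 < σ + p - 2 := by linarith
  set q := p * (σ - 1) / (σ + p - 2) with hqdef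
  have hq : 0 < q := div_pos (mul_pos hp0 (by linarith)) hps
  set c₂ := (2:ℝ) ^ ((σ - 3) / p - 1 / p - 1) with hc2def
  have hc₂ : 0 < c₂ := Real.rpow_pos_of_pos two_pos _
  have hc₂q : 0 < c₂ ^ q := Real.rpow_pos_of_pos hc₂ q
  set C₁ := (2:ℝ) ^ (σ - 1) / (σ - 1) + 1 with hC1def
  have hC₁ : 1 ≤ C₁ := by
    have h1 : 0 < (2:ℝ) ^ (σ - 1) := Real.rpow_pos_of_pos two_pos _
    have h2 : 0 < (2:ℝ) ^ (σ - 1) / (σ - 1) := div_pos h1 (by linarith)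
    rw [hC1def]; linarith
  have hC₁0 : 0 < C₁ := by linarith
  refine ⟨C₁ / c₂ ^ q, by positivity, ?_⟩
  intro ε hε x hx
  have hexp : (σ - 3) / p ≤ 0 :=
    div_nonpos_of_nonpos_of_nonneg (by linarith) hp0.le
  have hpinv : 0 ≤ 1 / p := by positivity
  rcases hx.eq_or_lt with h0 | hxpos
  · simp [← h0, Real.zero_rpow hq.ne']
  -- notation
  have hεx : 0 < ε + x := by linarith
  -- lower bound for the inner integral B
  set b₀ := x / 2 * ((ε + x) ^ ((σ - 3) / p) * (x / 2) ^ (1 / p)) with hb0def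
  have hb₀ : 0 ≤ b₀ := by
    have := Real.rpow_nonneg hεx.le ((σ - 3) / p)
    have := Real.rpow_nonneg (by linarith : (0:ℝ) ≤ x / 2) (1 / p)
    positivity
  have hB1 : b₀ ≤ ∫ y in (0:ℝ)..x, (ε + y) ^ ((σ - 3) / p) * y ^ (1 / p) := by
    have hi1 := stmt_14_int2 hε ((σ - 3) / p) (1 / p) hpinv (le_refl (0:ℝ))
      (by linarith : (0:ℝ) ≤ x / 2)
    have hi2 := stmt_14_int2 hε ((σ - 3) / p) (1 / p) hpinv
      (by linarith : (0:ℝ) ≤ x / 2) (by linarith : x / 2 ≤ x)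
    rw [← intervalIntegral.integral_add_adjacent_intervals hi1 hi2]
    have h1 : 0 ≤ ∫ y in (0:ℝ)..x / 2, (ε + y) ^ ((σ - 3) / p) * y ^ (1 / p) := by
      apply intervalIntegral.integral_nonneg (by linarith)
      intro u hu
      exact mul_nonneg (Real.rpow_nonneg (by linarith [hu.1] : (0:ℝ) ≤ ε + u) _)
        (Real.rpow_nonneg hu.1 _)
    have h2 : b₀ ≤ ∫ y in (x/2)..x, (ε + y) ^ ((σ - 3) / p) * y ^ (1 / p) := by
      have hmono := intervalIntegral.integral_mono_on (by linarith : x / 2 ≤ x)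
        (_root_.intervalIntegrable_const
          (c := (ε + x) ^ ((σ - 3) / p) * (x / 2) ^ (1 / p))) hi2 ?_
      · rw [intervalIntegral.integral_const, smul_eq_mul] at hmono
        calc b₀ = (x - x / 2) * ((ε + x) ^ ((σ - 3) / p) * (x / 2) ^ (1 / p)) := by
              rw [hb0def]; ring
          _ ≤ _ := hmono
      · intro y hy
        have hy1 : x / 2 ≤ y := hy.1
        have hy2 : y ≤ x := hy.2
        have hA : (ε + x) ^ ((σ - 3) / p) ≤ (ε + y) ^ ((σ - 3) / p) :=
          Real.rpow_le_rpow_of_nonpos (by linarith) (by linarith) hexp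
        have hBb : (x / 2) ^ (1 / p) ≤ y ^ (1 / p) :=
          Real.rpow_le_rpow (by linarith) hy1 hpinv
        exact mul_le_mul hA hBb (Real.rpow_nonneg (by linarith) _)
          (Real.rpow_nonneg (by linarith) _)
    linarith
  -- the final comparison with the RHS, via a lower bound b₁ ≤ b₀
  have main : ∀ U b₁ : ℝ, 0 ≤ b₁ → b₁ ≤ b₀ →
      (∫ y in (0:ℝ)..x, (ε + y) ^ (σ - 3) * y) ≤ U → U ≤ C₁ / c₂ ^ q * b₁ ^ q →
      (∫ y in (0:ℝ)..x, (ε + y) ^ (σ - 3) * y) ≤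
        C₁ / c₂ ^ q * (∫ y in (0:ℝ)..x, (ε + y) ^ ((σ - 3) / p) * y ^ (1 / p)) ^ q := by
    intro U b₁ hb₁0 hb₁ hAU hU
    have hrq : b₁ ^ q ≤
        (∫ y in (0:ℝ)..x, (ε + y) ^ ((σ - 3) / p) * y ^ (1 / p)) ^ q :=
      Real.rpow_le_rpow hb₁0 (hb₁.trans hB1) hq.le
    have hpos : 0 ≤ C₁ / c₂ ^ q := by positivity
    calc (∫ y in (0:ℝ)..x, (ε + y) ^ (σ - 3) * y) ≤ U := hAU
      _ ≤ C₁ / c₂ ^ q * b₁ ^ q := hU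
      _ ≤ _ := mul_le_mul_of_nonneg_left hrq hpos
  rcases le_total ε x with hc | hc
  · -- case ε ≤ x
    set b₁ := c₂ * x ^ ((σ + p - 2) / p) with hb1def
    have hb₁0 : 0 ≤ b₁ := by positivity
    have hxe : x ^ ((σ + p - 2) / p) = x ^ ((σ - 3) / p) * (x ^ (1 / p) * x) := by
      rw [show (σ + p - 2) / p = (σ - 3) / p + (1 / p + 1) by field_simp; ring,
        Real.rpow_add hxpos, Real.rpow_add hxpos, Real.rpow_one]
    have hb₁ : b₁ ≤ b₀ := by
      have h1 : (2 * x) ^ ((σ - 3) / p) ≤ (ε + x) ^ ((σ - 3) / p) :=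
        Real.rpow_le_rpow_of_nonpos (by linarith) (by linarith) hexp
      have halg := stmt_14_alg hxpos hxpos ((σ - 3) / p) (1 / p)
      calc b₁ = x / 2 * ((2 * x) ^ ((σ - 3) / p) * (x / 2) ^ (1 / p)) := by
            rw [halg, hb1def, hc2def, hxe]
        _ ≤ b₀ := by
            rw [hb0def]
            apply mul_le_mul_of_nonneg_left _ (by linarith : (0:ℝ) ≤ x / 2)
            exact mul_le_mul_of_nonneg_right h1
              (Real.rpow_nonneg (by linarith) _)
    apply main ((2:ℝ) ^ (σ - 1) * x ^ (σ - 1) / (σ - 1)) b₁ hb₁0 hb₁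
    · -- upper bound on A
      have step1 : (∫ y in (0:ℝ)..x, (ε + y) ^ (σ - 3) * y) ≤
          ∫ y in (0:ℝ)..x, (ε + y) ^ (σ - 2) := by
        apply intervalIntegral.integral_mono_on hx (stmt_14_int1 hε (σ - 3) le_rfl hx)
          (stmt_14_int0 hε (σ - 2) le_rfl hx)
        intro y hy
        have hεy : (0:ℝ) < ε + y := by linarith [hy.1]
        have h1 : (ε + y) ^ (σ - 3) * y ≤ (ε + y) ^ (σ - 3) * (ε + y) :=
          mul_le_mul_of_nonneg_left (by linarith) (Real.rpow_nonneg hεy.le _)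
        have h2 : (ε + y) ^ (σ - 3) * (ε + y) = (ε + y) ^ (σ - 2) := by
          rw [show σ - 2 = σ - 3 + 1 by ring, Real.rpow_add_one hεy.ne']
        linarith
      have step2 : (∫ y in (0:ℝ)..x, (ε + y) ^ (σ - 2)) =
          ((ε + x) ^ (σ - 1) - ε ^ (σ - 1)) / (σ - 1) := by
        have h := intervalIntegral.integral_comp_add_left (a := (0:ℝ)) (b := x)
          (fun u => u ^ (σ - 2)) ε
        simp only [add_zero] at h
        rw [h, integral_rpow (Or.inl (by linarith : (-1:ℝ) < σ - 2)),
          show σ - 2 + 1 = σ - 1 by ring]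
      have step3 : ((ε + x) ^ (σ - 1) - ε ^ (σ - 1)) / (σ - 1) ≤
          (2:ℝ) ^ (σ - 1) * x ^ (σ - 1) / (σ - 1) := by
        have h3 : (ε + x) ^ (σ - 1) ≤ (2 * x) ^ (σ - 1) :=
          Real.rpow_le_rpow (by linarith) (by linarith) (by linarith)
        have h4 : ((2:ℝ) * x) ^ (σ - 1) = 2 ^ (σ - 1) * x ^ (σ - 1) :=
          Real.mul_rpow (by norm_num) hx
        have h5 : 0 ≤ ε ^ (σ - 1) := Real.rpow_nonneg hε.le _
        rw [div_le_div_iff₀ (by linarith) (by linarith)]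
        nlinarith [h3, h4, h5]
      linarith [step1, step2 ▸ step1, step3]
    · -- coefficient comparison
      have hb₁q : b₁ ^ q = c₂ ^ q * x ^ (σ - 1) := by
        have he : (σ + p - 2) / p * q = σ - 1 := by
          rw [hqdef]; field_simp
        rw [hb1def, Real.mul_rpow hc₂.le (Real.rpow_nonneg hxpos.le _),
          ← Real.rpow_mul hxpos.le, he]
      rw [hb₁q]
      calc (2:ℝ) ^ (σ - 1) * x ^ (σ - 1) / (σ - 1)
          = 2 ^ (σ - 1) / (σ - 1) * x ^ (σ - 1) := by ring
        _ ≤ C₁ * x ^ (σ - 1) := by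
            apply mul_le_mul_of_nonneg_right _ (Real.rpow_nonneg hxpos.le _)
            rw [hC1def]; linarith
        _ = C₁ / c₂ ^ q * (c₂ ^ q * x ^ (σ - 1)) := by field_simp
  · -- case x ≤ ε
    set b₁ := c₂ * (ε ^ ((σ - 3) / p) * (x ^ (1 / p) * x)) with hb1def
    have hb₁0 : 0 ≤ b₁ := by positivity
    have hb₁ : b₁ ≤ b₀ := by
      have h1 : (2 * ε) ^ ((σ - 3) / p) ≤ (ε + x) ^ ((σ - 3) / p) :=
        Real.rpow_le_rpow_of_nonpos (by linarith) (by linarith) hexp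
      have halg := stmt_14_alg hε hxpos ((σ - 3) / p) (1 / p)
      calc b₁ = x / 2 * ((2 * ε) ^ ((σ - 3) / p) * (x / 2) ^ (1 / p)) := by
            rw [halg, hb1def, hc2def]
        _ ≤ b₀ := by
            rw [hb0def]
            apply mul_le_mul_of_nonneg_left _ (by linarith : (0:ℝ) ≤ x / 2)
            exact mul_le_mul_of_nonneg_right h1
              (Real.rpow_nonneg (by linarith) _)
    apply main (ε ^ (σ - 3) * x * x) b₁ hb₁0 hb₁
    · -- upper bound on A
      have step1 : (∫ y in (0:ℝ)..x, (ε + y) ^ (σ - 3) * y) ≤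
          ∫ y in (0:ℝ)..x, (fun _ : ℝ => ε ^ (σ - 3) * x) y := by
        apply intervalIntegral.integral_mono_on hx (stmt_14_int1 hε (σ - 3) le_rfl hx)
          (_root_.intervalIntegrable_const)
        intro y hy
        have hεy : (0:ℝ) < ε + y := by linarith [hy.1]
        have h1 : (ε + y) ^ (σ - 3) ≤ ε ^ (σ - 3) :=
          Real.rpow_le_rpow_of_nonpos hε (by linarith [hy.1]) (by linarith)
        exact mul_le_mul h1 hy.2 hy.1 (Real.rpow_nonneg hε.le _)
      rw [intervalIntegral.integral_const, smul_eq_mul] at step1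
      calc (∫ y in (0:ℝ)..x, (ε + y) ^ (σ - 3) * y)
          ≤ (x - 0) * (ε ^ (σ - 3) * x) := step1
        _ = ε ^ (σ - 3) * x * x := by ring
    · -- coefficient comparison
      obtain ⟨A', hA'def⟩ : ∃ a, a = (σ - 3) * (σ - 1) / (σ + p - 2) := ⟨_, rfl⟩
      obtain ⟨G, hGdef⟩ : ∃ a, a = (p + 1) * (σ - 1) / (σ + p - 2) := ⟨_, rfl⟩
      obtain ⟨β, hβdef⟩ : ∃ a, a = (p - 1) * (3 - σ) / (σ + p - 2) := ⟨_, rfl⟩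
      have hβ0 : 0 ≤ β := by
        rw [hβdef]
        apply div_nonneg (mul_nonneg (by linarith) (by linarith)) hps.le
      have hb₁q : b₁ ^ q = c₂ ^ q * (ε ^ A' * x ^ G) := by
        have hxx : x ^ (1 / p) * x = x ^ (1 / p + 1) := by
          rw [Real.rpow_add_one hxpos.ne']
        have heA : (σ - 3) / p * q = A' := by
          rw [hqdef, hA'def]; field_simp
        have heG : (1 / p + 1) * q = G := by
          rw [hqdef, hGdef]; field_simp; ring
        rw [hb1def, hxx, Real.mul_rpow hc₂.le
            (mul_nonneg (Real.rpow_nonneg hε.le _) (Real.rpow_nonneg hxpos.le _)),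
          Real.mul_rpow (Real.rpow_nonneg hε.le _) (Real.rpow_nonneg hxpos.le _),
          ← Real.rpow_mul hε.le, ← Real.rpow_mul hxpos.le, heA, heG]
      rw [hb₁q]
      have hGβ : G + β = 2 := by rw [hGdef, hβdef]; field_simp; ring
      have hAβ : σ - 3 + β = A' := by rw [hβdef, hA'def]; field_simp; ring
      have hxx2 : x * x = x ^ G * x ^ β := by
        rw [← Real.rpow_add hxpos, hGβ,
          show (2:ℝ) = ((2:ℕ):ℝ) by norm_num, Real.rpow_natCast]
        ring
      have hεe : ε ^ A' = ε ^ (σ - 3) * ε ^ β := by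
        rw [← Real.rpow_add hε, hAβ]
      have hxβ : x ^ β ≤ ε ^ β := Real.rpow_le_rpow hxpos.le hc hβ0
      have hεσ : (0:ℝ) < ε ^ (σ - 3) := Real.rpow_pos_of_pos hε _
      have hxG : (0:ℝ) < x ^ G := Real.rpow_pos_of_pos hxpos _
      have hεA : (0:ℝ) < ε ^ A' := Real.rpow_pos_of_pos hε _
      calc ε ^ (σ - 3) * x * x = ε ^ (σ - 3) * x ^ G * x ^ β := by
            rw [mul_assoc, hxx2]; ring
        _ ≤ ε ^ (σ - 3) * x ^ G * ε ^ β := by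
            apply mul_le_mul_of_nonneg_left hxβ (by positivity)
        _ = ε ^ A' * x ^ G := by rw [hεe]; ring
        _ ≤ C₁ * (ε ^ A' * x ^ G) := le_mul_of_one_le_left (by positivity) hC₁
        _ = C₁ / c₂ ^ q * (c₂ ^ q * (ε ^ A' * x ^ G)) := by field_simp
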